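/- Let U ⊆ ℝᵐ × ℝˢ be open, let g : U → ℝˢ be a C^∞ map with ∂₂g(p,q) invertible for every (p,q) ∈ U, set M = g⁻¹(0), let E : ℝ × U × ℝᵐ × ℝˢ → ℝᵐ be continuous, and define Ẽ(t,p,q,u,v) = ( E(t,p,q,u,v), −[∂₂g(p,q)]⁻¹( ∂₁g(p,q) E(t,p,q,u,v) + g''(p,q)((u,v),(u,v)) ) ). Let ξ = (x,y) : J → M be a C² curve on a nontrivial interval J such that P_{ξ(t)}(ξ̈(t)) = P_{ξ(t)}( Ẽ(t, ξ(t), ξ̇(t)) ) for all t ∈ J, where P_ξ denotes the orthogonal projection of ℝᵐ × ℝˢ onto ker g'(ξ). Then ξ̈(t) = Ẽ(t, ξ(t), ξ̇(t)) for all t ∈ J; in particular ẍ(t) = E(t, x(t), y(t), ẋ(t), ẏ(t)) and g(x(t),y(t)) = 0 for all t ∈ J, i.e. (x,y) is a solution of the DAE ẍ = E(t,x,y,ẋ,ẏ), g(x,y) = 0. -/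

import Mathlib

open Matrix

/-!
Differentiating the constraint `g (ξ t) = 0` twice along `J` gives the hidden constraint
`g'(ξ) ξ̈ + g''(ξ)(ξ̇, ξ̇) = 0`, and `Ẽ` is built exactly so that `g'(ξ) Ẽ = -g''(ξ)(ξ̇, ξ̇)`.
Hence `ξ̈ - Ẽ` lies in `ker g'(ξ)`; the hypothesis says it is also orthogonal to that kernel,
so it vanishes.
-/

theorem Set.OrdConnected.uniqueDiffOn {J : Set ℝ} (hJ : J.OrdConnected) (hJnt : J.Nontrivial) :
    UniqueDiffOn ℝ J := by
  obtain ⟨a, ha, b, hb, hab⟩ := hJnt.exists_lt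
  refine uniqueDiffOn_convex hJ.convex ⟨(a + b) / 2, interior_mono (hJ.out ha hb) ?_⟩
  rw [interior_Icc]
  constructor <;> linarith

theorem UniqueDiffWithinAt.hasDerivWithinAt_eq_zero {𝕜 F : Type*} [NontriviallyNormedField 𝕜]
    [NormedAddCommGroup F] [NormedSpace 𝕜 F] {f : 𝕜 → F} {f' : F} {J : Set 𝕜} {t : 𝕜}
    (hJ : UniqueDiffWithinAt 𝕜 J t) (ht : t ∈ J) (hf : HasDerivWithinAt f f' J t)
    (h0 : ∀ τ ∈ J, f τ = 0) : f' = 0 :=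
  hJ.eq_deriv J hf ((hasDerivWithinAt_const t J 0).congr h0 (h0 t ht))

section Constraint

variable {E F : Type*} [NormedAddCommGroup E] [NormedSpace ℝ E] [NormedAddCommGroup F]
  [NormedSpace ℝ F] {U : Set E} {g : E → F} {Dg : E → E →L[ℝ] F} {J : Set ℝ} {ξ ξ' : ℝ → E}

theorem apply_velocity_eq_zero_of_constraint (hJ : UniqueDiffOn ℝ J)
    (hDg : ∀ p ∈ U, HasFDerivAt g (Dg p) p) (hmem : ∀ t ∈ J, ξ t ∈ U)
    (hg0 : ∀ t ∈ J, g (ξ t) = 0) (hξ' : ∀ t ∈ J, HasDerivAt ξ (ξ' t) t) :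
    ∀ t ∈ J, Dg (ξ t) (ξ' t) = 0 := fun t ht =>
  (hJ t ht).hasDerivWithinAt_eq_zero ht
    ((hDg _ (hmem t ht)).comp_hasDerivAt t (hξ' t ht)).hasDerivWithinAt hg0

theorem hidden_constraint {D2g : E → E →L[ℝ] E →L[ℝ] F} {ξ'' : ℝ → E} (hJ : UniqueDiffOn ℝ J)
    (hDg : ∀ p ∈ U, HasFDerivAt g (Dg p) p) (hD2g : ∀ p ∈ U, HasFDerivAt Dg (D2g p) p)
    (hmem : ∀ t ∈ J, ξ t ∈ U) (hg0 : ∀ t ∈ J, g (ξ t) = 0)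
    (hξ' : ∀ t ∈ J, HasDerivAt ξ (ξ' t) t) (hξ'' : ∀ t ∈ J, HasDerivAt ξ' (ξ'' t) t) :
    ∀ t ∈ J, D2g (ξ t) (ξ' t) (ξ' t) + Dg (ξ t) (ξ'' t) = 0 := fun t ht =>
  (hJ t ht).hasDerivWithinAt_eq_zero ht
    (((hD2g _ (hmem t ht)).comp_hasDerivAt t (hξ' t ht)).clm_apply (hξ'' t ht)).hasDerivWithinAt
    (apply_velocity_eq_zero_of_constraint hJ hDg hmem hg0 hξ')

end Constraint

theorem LinearMap.apply_mk_neg_symm_add {R E₁ E₂ F : Type*} [Ring R] [AddCommGroup E₁]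
    [Module R E₁] [AddCommGroup E₂] [Module R E₂] [AddCommGroup F] [Module R F]
    (L : E₁ × E₂ →ₗ[R] F) (B : E₂ ≃ₗ[R] F) (hB : ∀ v, B v = L (0, v)) (e : E₁) (c : F) :
    L (e, -B.symm (L (e, 0) + c)) = -c := by
  have hsplit : (e, -B.symm (L (e, 0) + c)) = (e, 0) + (0, -B.symm (L (e, 0) + c)) := by simp
  rw [hsplit, map_add, ← hB, map_neg, B.apply_symm_apply]
  abel

theorem Prod.eq_zero_of_dotProduct_self_add_dotProduct_self_eq_zero {m n R : Type*} [Fintype m]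
    [Fintype n] [Ring R] [LinearOrder R] [IsStrictOrderedRing R] {w : (m → R) × (n → R)}
    (h : w.1 ⬝ᵥ w.1 + w.2 ⬝ᵥ w.2 = 0) : w = 0 := by
  have h₁ : 0 ≤ w.1 ⬝ᵥ w.1 := Finset.sum_nonneg fun i _ => mul_self_nonneg (w.1 i)
  have h₂ : 0 ≤ w.2 ⬝ᵥ w.2 := Finset.sum_nonneg fun i _ => mul_self_nonneg (w.2 i)
  rw [add_eq_zero_iff_of_nonneg h₁ h₂, dotProduct_self_eq_zero, dotProduct_self_eq_zero] at h
  exact Prod.ext h.1 h.2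

theorem statement14_general (m s : ℕ) (U : Set ((Fin m → ℝ) × (Fin s → ℝ)))
    (g : (Fin m → ℝ) × (Fin s → ℝ) → (Fin s → ℝ))
    (Dg : (Fin m → ℝ) × (Fin s → ℝ) → ((Fin m → ℝ) × (Fin s → ℝ)) →L[ℝ] (Fin s → ℝ))
    (hDg : ∀ ξ ∈ U, HasFDerivAt g (Dg ξ) ξ)
    (D2g : (Fin m → ℝ) × (Fin s → ℝ) →
      ((Fin m → ℝ) × (Fin s → ℝ)) →L[ℝ] ((Fin m → ℝ) × (Fin s → ℝ)) →L[ℝ] (Fin s → ℝ))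
    (hD2g : ∀ ξ ∈ U, HasFDerivAt Dg (D2g ξ) ξ)
    (B : (Fin m → ℝ) × (Fin s → ℝ) → (Fin s → ℝ) ≃L[ℝ] (Fin s → ℝ))
    (hB : ∀ ξ ∈ U, ∀ v : Fin s → ℝ, B ξ v = Dg ξ (0, v))
    (E : ℝ → (Fin m → ℝ) → (Fin s → ℝ) → (Fin m → ℝ) → (Fin s → ℝ) → (Fin m → ℝ))
    (J : Set ℝ) (hJ : J.OrdConnected) (hJnt : J.Nontrivial)
    (x x' x'' : ℝ → Fin m → ℝ) (y y' y'' : ℝ → Fin s → ℝ)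
    (hmem : ∀ t ∈ J, (x t, y t) ∈ U)
    (hg0 : ∀ t ∈ J, g (x t, y t) = 0)
    (hx' : ∀ t ∈ J, HasDerivAt x (x' t) t)
    (hx'' : ∀ t ∈ J, HasDerivAt x' (x'' t) t)
    (hy' : ∀ t ∈ J, HasDerivAt y (y' t) t)
    (hy'' : ∀ t ∈ J, HasDerivAt y' (y'' t) t)
    (hproj : ∀ t ∈ J, ∀ z : (Fin m → ℝ) × (Fin s → ℝ), Dg (x t, y t) z = 0 →
      ((x'' t, y'' t)
          - (E t (x t) (y t) (x' t) (y' t),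
             -(B (x t, y t)).symm
               (Dg (x t, y t) (E t (x t) (y t) (x' t) (y' t), 0)
                 + D2g (x t, y t) (x' t, y' t) (x' t, y' t)))).1 ⬝ᵥ z.1
        + ((x'' t, y'' t)
          - (E t (x t) (y t) (x' t) (y' t),
             -(B (x t, y t)).symm
               (Dg (x t, y t) (E t (x t) (y t) (x' t) (y' t), 0)
                 + D2g (x t, y t) (x' t, y' t) (x' t, y' t)))).2 ⬝ᵥ z.2 = 0) :
    ∀ t ∈ J,
      (x'' t, y'' t)
          = (E t (x t) (y t) (x' t) (y' t),
             -(B (x t, y t)).symm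
               (Dg (x t, y t) (E t (x t) (y t) (x' t) (y' t), 0)
                 + D2g (x t, y t) (x' t, y' t) (x' t, y' t)))
        ∧ x'' t = E t (x t) (y t) (x' t) (y' t) ∧ g (x t, y t) = 0 := by
  intro t ht
  have hacc := hidden_constraint (ξ := fun τ => (x τ, y τ)) (ξ' := fun τ => (x' τ, y' τ))
    (ξ'' := fun τ => (x'' τ, y'' τ)) (hJ.uniqueDiffOn hJnt) hDg hD2g hmem hg0
    (fun t ht => (hx' t ht).prodMk (hy' t ht))
    (fun t ht => (hx'' t ht).prodMk (hy'' t ht)) t ht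
  set Et : (Fin m → ℝ) × (Fin s → ℝ) := (E t (x t) (y t) (x' t) (y' t),
    -(B (x t, y t)).symm
      (Dg (x t, y t) (E t (x t) (y t) (x' t) (y' t), 0)
        + D2g (x t, y t) (x' t, y' t) (x' t, y' t)))
  have hDgEt : Dg (x t, y t) Et = -D2g (x t, y t) (x' t, y' t) (x' t, y' t) :=
    LinearMap.apply_mk_neg_symm_add (Dg (x t, y t) : _ →ₗ[ℝ] _) (B (x t, y t)).toLinearEquiv
      (hB _ (hmem t ht)) (E t (x t) (y t) (x' t) (y' t))
      (D2g (x t, y t) (x' t, y' t) (x' t, y' t))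
  have hker : Dg (x t, y t) ((x'' t, y'' t) - Et) = 0 := by
    rw [map_sub, hDgEt]
    linear_combination (norm := module) hacc
  have heq : (x'' t, y'' t) = Et := sub_eq_zero.1
    (Prod.eq_zero_of_dotProduct_self_add_dotProduct_self_eq_zero (hproj t ht _ hker))
  exact ⟨heq, congrArg Prod.fst heq, hg0 t ht⟩

/-- Let `U ⊆ ℝᵐ × ℝˢ` be open, `g : U → ℝˢ` a `C^∞` map with first and
second Fréchet derivatives `Dg ξ`, `D2g ξ`, whose partial derivative in the second
variable `B ξ = (v ↦ Dg ξ (0, v))` is invertible on `U`; set `M = g⁻¹(0)`.  Let `E` be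
continuous and `Ẽ(t,p,q,u,v) = (E(t,p,q,u,v),
  -[∂₂g(p,q)]⁻¹(∂₁g(p,q)E(t,p,q,u,v) + g''(p,q)((u,v),(u,v))))`.
Let `ξ = (x, y) : J → M` be a `C²` curve on a nontrivial interval `J` such that
`P_{ξ t}(ξ̈ t) = P_{ξ t}(Ẽ(t, ξ t, ξ̇ t))` for all `t ∈ J`, where `P_ξ` is the orthogonal
projection of `ℝᵐ × ℝˢ` onto `ker g'(ξ)`; since `P_ξ a = P_ξ b` holds exactly when
`a - b` is orthogonal to `ker g'(ξ)`, this hypothesis is expressed below as the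
orthogonality (for the standard Euclidean inner product of `ℝᵐ × ℝˢ`, given by dot
products of the components) of `ξ̈ t - Ẽ(t, ξ t, ξ̇ t)` to every element of
`ker g'(ξ t)`.  Then `ξ̈ t = Ẽ(t, ξ t, ξ̇ t)` for all `t ∈ J`; in particular
`ẍ t = E(t, x t, y t, ẋ t, ẏ t)` and `g (x t, y t) = 0` for all `t ∈ J`, i.e. `(x, y)`
is a solution of the DAE `ẍ = E(t,x,y,ẋ,ẏ), g(x,y) = 0`. -/
theorem statement14 (m s : ℕ) (U : Set ((Fin m → ℝ) × (Fin s → ℝ))) (hU : IsOpen U)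
    (g : (Fin m → ℝ) × (Fin s → ℝ) → (Fin s → ℝ)) (hg : ContDiffOn ℝ (⊤ : ℕ∞) g U)
    (Dg : (Fin m → ℝ) × (Fin s → ℝ) → ((Fin m → ℝ) × (Fin s → ℝ)) →L[ℝ] (Fin s → ℝ))
    (hDg : ∀ ξ ∈ U, HasFDerivAt g (Dg ξ) ξ)
    (D2g : (Fin m → ℝ) × (Fin s → ℝ) →
      ((Fin m → ℝ) × (Fin s → ℝ)) →L[ℝ] ((Fin m → ℝ) × (Fin s → ℝ)) →L[ℝ] (Fin s → ℝ))
    (hD2g : ∀ ξ ∈ U, HasFDerivAt Dg (D2g ξ) ξ)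
    (B : (Fin m → ℝ) × (Fin s → ℝ) → (Fin s → ℝ) ≃L[ℝ] (Fin s → ℝ))
    (hB : ∀ ξ ∈ U, ∀ v : Fin s → ℝ, B ξ v = Dg ξ (0, v))
    (E : ℝ → (Fin m → ℝ) → (Fin s → ℝ) → (Fin m → ℝ) → (Fin s → ℝ) → (Fin m → ℝ))
    (hE : Continuous fun q : ℝ × ((Fin m → ℝ) × (Fin s → ℝ)) × (Fin m → ℝ) × (Fin s → ℝ) =>
      E q.1 q.2.1.1 q.2.1.2 q.2.2.1 q.2.2.2)
    (J : Set ℝ) (hJ : J.OrdConnected) (hJnt : J.Nontrivial)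
    (x x' x'' : ℝ → Fin m → ℝ) (y y' y'' : ℝ → Fin s → ℝ)
    (hmem : ∀ t ∈ J, (x t, y t) ∈ U)
    (hg0 : ∀ t ∈ J, g (x t, y t) = 0)
    (hx' : ∀ t ∈ J, HasDerivAt x (x' t) t)
    (hx'' : ∀ t ∈ J, HasDerivAt x' (x'' t) t)
    (hy' : ∀ t ∈ J, HasDerivAt y (y' t) t)
    (hy'' : ∀ t ∈ J, HasDerivAt y' (y'' t) t)
    (hx''cont : ContinuousOn x'' J) (hy''cont : ContinuousOn y'' J)
    (hproj : ∀ t ∈ J, ∀ z : (Fin m → ℝ) × (Fin s → ℝ), Dg (x t, y t) z = 0 →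
      ((x'' t, y'' t)
          - (E t (x t) (y t) (x' t) (y' t),
             -(B (x t, y t)).symm
               (Dg (x t, y t) (E t (x t) (y t) (x' t) (y' t), 0)
                 + D2g (x t, y t) (x' t, y' t) (x' t, y' t)))).1 ⬝ᵥ z.1
        + ((x'' t, y'' t)
          - (E t (x t) (y t) (x' t) (y' t),
             -(B (x t, y t)).symm
               (Dg (x t, y t) (E t (x t) (y t) (x' t) (y' t), 0)
                 + D2g (x t, y t) (x' t, y' t) (x' t, y' t)))).2 ⬝ᵥ z.2 = 0) :
    ∀ t ∈ J,
      (x'' t, y'' t)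
          = (E t (x t) (y t) (x' t) (y' t),
             -(B (x t, y t)).symm
               (Dg (x t, y t) (E t (x t) (y t) (x' t) (y' t), 0)
                 + D2g (x t, y t) (x' t, y' t) (x' t, y' t)))
        ∧ x'' t = E t (x t) (y t) (x' t) (y' t) ∧ g (x t, y t) = 0 :=
  statement14_general m s U g Dg hDg D2g hD2g B hB E J hJ hJnt x x' x'' y y' y'' hmem hg0 hx' hx''
    hy' hy'' hproj
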